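/- arXiv:math/9812041 — 4 statements merged into one kernel-verified Lean document; each statement's English description precedes it below -/
import Mathlib

section
/- Let H = ℂⁿ with its standard Hermitian inner product h, and let e(x) = π^{-n/4} exp(-|x|²/2) be the normalized Gaussian ground state in L²(ℝⁿ). For u = a + ib with a, b ∈ ℝⁿ, define the operator ũ acting on Schwartz functions by (ũ f)(x) = i (a·x) f(x) + b·∇f(x). Then for all u, v ∈ ℂⁿ, the L² inner product ⟨ũ(e), ṽ(e)⟩ equals (1/2) h(u,v). -/
open MeasureTheory Complex

/-- The infinitesimal Heisenberg operator `ũ = i a·x + b·∇` for `u = a + ib`. -/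
noncomputable def heisOp {n : ℕ} (a b : EuclideanSpace ℝ (Fin n))
    (f : EuclideanSpace ℝ (Fin n) → ℂ) : EuclideanSpace ℝ (Fin n) → ℂ :=
  fun x => Complex.I * (∑ i, (a i : ℂ) * (x i : ℂ)) * f x + fderiv ℝ f x b

/-- The normalized Gaussian ground state `e(x) = π^{-n/4} exp(-|x|²/2)`. -/
noncomputable def groundState (n : ℕ) : EuclideanSpace ℝ (Fin n) → ℂ :=
  fun x => ((Real.pi ^ (-(n : ℝ) / 4) * Real.exp (-‖x‖ ^ 2 / 2) : ℝ) : ℂ)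

open Real Filter Asymptotics

section Aux
variable {n : ℕ}

lemma int_g0 : ∫ x : ℝ, Real.exp (-x^2) = Real.sqrt π := by
  simpa using integral_gaussian 1

lemma intg_g0 : Integrable fun x : ℝ => Real.exp (-x^2) := by
  simpa using integrable_exp_neg_mul_sq (one_pos)

lemma intg_g1 : Integrable fun x : ℝ => x * Real.exp (-x^2) := by
  simpa using integrable_mul_exp_neg_mul_sq (one_pos)

lemma intg_g2 : Integrable fun x : ℝ => x^2 * Real.exp (-x^2) := by
  have := integrable_rpow_mul_exp_neg_mul_sq (one_pos) (by norm_num : (-1:ℝ) < 2)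
  simpa [Real.rpow_natCast] using this

lemma int_g1 : ∫ x : ℝ, x * Real.exp (-x^2) = 0 := by
  have h := MeasureTheory.integral_neg_eq_self (fun x : ℝ => x * Real.exp (-x^2)) volume
  simp only [neg_sq, neg_mul] at h
  rw [integral_neg] at h
  linarith

lemma tendsto_xexp_top : Tendsto (fun x : ℝ => x * Real.exp (-x^2)) atTop (nhds 0) := by
  have h := rpow_mul_exp_neg_mul_sq_isLittleO_exp_neg (one_pos) 1
  simp only [one_mul, Real.rpow_one, neg_one_mul] at h
  have h2 : Tendsto (fun x : ℝ => Real.exp (-(1/2) * x)) atTop (nhds 0) := by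
    apply Real.tendsto_exp_atBot.comp
    exact Tendsto.const_mul_atTop_of_neg (by norm_num) tendsto_id
  exact h.trans_tendsto h2

lemma tendsto_xexp_bot : Tendsto (fun x : ℝ => x * Real.exp (-x^2)) atBot (nhds 0) := by
  have := (tendsto_xexp_top).comp tendsto_neg_atBot_atTop
  have e : (fun x : ℝ => (-x) * Real.exp (-(-x)^2)) = fun x : ℝ => -(x * Real.exp (-x^2)) := by
    funext x; rw [neg_sq]; ring
  simp only [Function.comp_def] at this
  rw [e] at this
  simpa using (this.neg)

lemma int_g2 : ∫ x : ℝ, x^2 * Real.exp (-x^2) = Real.sqrt π / 2 := by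
  have intg_g0 : Integrable fun x : ℝ => Real.exp (-x^2) := by
    simpa using integrable_exp_neg_mul_sq (one_pos)
  have intg_g2 : Integrable fun x : ℝ => x^2 * Real.exp (-x^2) := by
    have := integrable_rpow_mul_exp_neg_mul_sq (one_pos) (by norm_num : (-1:ℝ) < 2)
    simpa [Real.rpow_natCast] using this
  have hderiv : ∀ x : ℝ, HasDerivAt (fun x : ℝ => -x/2 * Real.exp (-x^2))
      (x^2 * Real.exp (-x^2) - (1/2) * Real.exp (-x^2)) x := by
    intro x
    have h1 : HasDerivAt (fun x : ℝ => -x/2) (-1/2) x := by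
      simpa using ((hasDerivAt_id x).neg.div_const 2)
    have h2 : HasDerivAt (fun x : ℝ => Real.exp (-x^2)) (Real.exp (-x^2) * (-(2*x))) x := by
      have hx : HasDerivAt (fun x : ℝ => -x^2) (-(2*x)) x := by
        simpa using ((hasDerivAt_pow 2 x).fun_neg)
      exact (Real.hasDerivAt_exp _).comp x hx
    have := h1.mul h2
    convert! this using 1
    ring
  have hint : Integrable (fun x : ℝ => x^2 * Real.exp (-x^2) - (1/2) * Real.exp (-x^2)) :=
    intg_g2.sub (intg_g0.const_mul _)
  have e : (fun x : ℝ => -x/2 * Real.exp (-x^2)) = fun x : ℝ => (-(1/2)) * (x * Real.exp (-x^2)) := by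
      funext x; ring
  have hbot : Tendsto (fun x : ℝ => -x/2 * Real.exp (-x^2)) atBot (nhds (0:ℝ)) := by
    rw [e]; simpa using (tendsto_xexp_bot.const_mul (-(1/2 : ℝ)))
  have htop : Tendsto (fun x : ℝ => -x/2 * Real.exp (-x^2)) atTop (nhds (0:ℝ)) := by
    rw [e]; simpa using (tendsto_xexp_top.const_mul (-(1/2 : ℝ)))
  have key := integral_of_hasDerivAt_of_tendsto hderiv hint hbot htop
  rw [integral_sub intg_g2 (intg_g0.const_mul _), integral_const_mul] at key
  have h0 : ∫ x : ℝ, Real.exp (-x^2) = Real.sqrt π := by simpa using integral_gaussian 1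
  rw [h0] at key
  simp at key
  linarith

noncomputable def Fm (i j k : Fin n) : ℝ → ℝ :=
  fun t => (if k = i then t else 1) * (if k = j then t else 1) * Real.exp (-t^2)

lemma Fm_integrable (i j k : Fin n) : Integrable (Fm i j k) := by
  have intg_g0 : Integrable fun x : ℝ => Real.exp (-x^2) := by
    simpa using integrable_exp_neg_mul_sq (one_pos)
  have intg_g1 : Integrable fun x : ℝ => x * Real.exp (-x^2) := by
    simpa using integrable_mul_exp_neg_mul_sq (one_pos)
  have intg_g2 : Integrable fun x : ℝ => x^2 * Real.exp (-x^2) := by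
    have := integrable_rpow_mul_exp_neg_mul_sq (one_pos) (by norm_num : (-1:ℝ) < 2)
    simpa [Real.rpow_natCast] using this
  unfold Fm
  by_cases hi : k = i <;> by_cases hj : k = j
  · simp only [if_pos hi, if_pos hj]; simpa [sq] using intg_g2
  · simp only [if_pos hi, if_neg hj, mul_one]; exact intg_g1
  · simp only [if_neg hi, if_pos hj, one_mul]; exact intg_g1
  · simp only [if_neg hi, if_neg hj, one_mul]; exact intg_g0

lemma Fm_prod (i j : Fin n) (x : Fin n → ℝ) :
    ∏ k, Fm i j k (x k) = x i * x j * Real.exp (-∑ k, (x k)^2) := by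
  unfold Fm
  rw [Finset.prod_mul_distrib, Finset.prod_mul_distrib]
  rw [Finset.prod_ite_eq' Finset.univ i (fun k => x k), Finset.prod_ite_eq' Finset.univ j (fun k => x k)]
  simp [← Real.exp_sum, Finset.sum_neg_distrib]

lemma moment_pi (i j : Fin n) :
    ∫ x : Fin n → ℝ, x i * x j * Real.exp (-∑ k, (x k)^2)
      = (if i = j then Real.sqrt π ^ n / 2 else 0) := by
  rw [show (fun x : Fin n → ℝ => x i * x j * Real.exp (-∑ k, (x k)^2))
      = fun x => ∏ k, Fm i j k (x k) by funext x; rw [Fm_prod]]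
  rw [MeasureTheory.integral_fintype_prod_volume_eq_prod (f := fun k => Fm i j k)]
  have h0 : ∫ x : ℝ, Real.exp (-x^2) = Real.sqrt π := by simpa using integral_gaussian 1
  rcases eq_or_ne i j with rfl | hij
  · simp only [if_pos rfl]
    have key : ∀ k, (∫ t : ℝ, Fm i i k t) = (if k = i then (1/2:ℝ) else 1) * Real.sqrt π := by
      intro k
      unfold Fm
      by_cases hk : k = i
      · simp only [if_pos hk]
        rw [show (fun t : ℝ => t * t * Real.exp (-t^2)) = fun t : ℝ => t^2 * Real.exp (-t^2)
          from funext fun t => by ring]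
        rw [int_g2]; ring
      · simp only [if_neg hk, one_mul]
        simp [h0]
    rw [Finset.prod_congr rfl (fun k _ => key k), Finset.prod_mul_distrib,
      Finset.prod_ite_eq' Finset.univ i (fun _ => (1/2:ℝ))]
    simp
    ring
  · simp only [if_neg hij]
    apply Finset.prod_eq_zero (Finset.mem_univ i)
    unfold Fm
    rw [show (fun t : ℝ => (if i = i then t else 1) * (if i = j then t else 1) * Real.exp (-t^2))
        = fun t : ℝ => t * Real.exp (-t^2) from funext fun t => by simp [hij]]
    exact int_g1

lemma norm_sq_euc (x : EuclideanSpace ℝ (Fin n)) : ‖x‖^2 = ∑ k, (x k)^2 := by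
  rw [EuclideanSpace.norm_eq, Real.sq_sqrt]
  · simp [sq_abs]
  · positivity

lemma euc_comp_eq (i j : Fin n) (y : Fin n → ℝ) :
    ((MeasurableEquiv.toLp 2 (Fin n → ℝ)) y) i
      * ((MeasurableEquiv.toLp 2 (Fin n → ℝ)) y) j
      * Real.exp (-‖(MeasurableEquiv.toLp 2 (Fin n → ℝ)) y‖^2)
    = y i * y j * Real.exp (-∑ k, (y k)^2) := by
  rw [norm_sq_euc]
  simp [MeasurableEquiv.coe_toLp]

lemma moment_euc (i j : Fin n) :
    ∫ x : EuclideanSpace ℝ (Fin n), x i * x j * Real.exp (-‖x‖^2)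
      = (if i = j then Real.sqrt π ^ n / 2 else 0) := by
  have h : MeasurePreserving (MeasurableEquiv.toLp 2 (Fin n → ℝ)) := (EuclideanSpace.volume_preserving_symm_measurableEquiv_toLp (Fin n)).symm
  rw [← h.integral_comp (MeasurableEquiv.measurableEmbedding _)]
  rw [show (fun y : Fin n → ℝ => ((MeasurableEquiv.toLp 2 (Fin n → ℝ)) y) i
      * ((MeasurableEquiv.toLp 2 (Fin n → ℝ)) y) j
      * Real.exp (-‖(MeasurableEquiv.toLp 2 (Fin n → ℝ)) y‖^2))
      = fun y : Fin n → ℝ => y i * y j * Real.exp (-∑ k, (y k)^2)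
    from funext fun y => euc_comp_eq i j y]
  exact moment_pi i j

lemma moment_euc_integrable (i j : Fin n) :
    Integrable (fun x : EuclideanSpace ℝ (Fin n) => x i * x j * Real.exp (-‖x‖^2)) := by
  have h : MeasurePreserving (MeasurableEquiv.toLp 2 (Fin n → ℝ)) := (EuclideanSpace.volume_preserving_symm_measurableEquiv_toLp (Fin n)).symm
  rw [← MeasurePreserving.integrable_comp_emb h (MeasurableEquiv.measurableEmbedding _)]
  have : ((fun x : EuclideanSpace ℝ (Fin n) => x i * x j * Real.exp (-‖x‖^2)) ∘
      (MeasurableEquiv.toLp 2 (Fin n → ℝ)))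
      = fun y : Fin n → ℝ => ∏ k, Fm i j k (y k) := by
    funext y
    simp only [Function.comp_apply]
    rw [euc_comp_eq i j y, Fm_prod]
  rw [this]
  exact Integrable.fintype_prod (fun k => Fm_integrable i j k)

lemma groundState_real_hasFDerivAt (x : EuclideanSpace ℝ (Fin n)) :
    HasFDerivAt (fun y : EuclideanSpace ℝ (Fin n) =>
        Real.pi ^ (-(n : ℝ) / 4) * Real.exp (-‖y‖ ^ 2 / 2))
      ((-(Real.pi ^ (-(n : ℝ) / 4) * Real.exp (-‖x‖ ^ 2 / 2))) •
        (innerSL ℝ x : EuclideanSpace ℝ (Fin n) →L[ℝ] ℝ)) x := by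
  have hq : HasFDerivAt (fun y : EuclideanSpace ℝ (Fin n) => ‖y‖^2)
      ((2:ℕ) • (innerSL ℝ x : EuclideanSpace ℝ (Fin n) →L[ℝ] ℝ)) x := by
    simpa using (hasFDerivAt_id x).norm_sq
  have h1 : HasFDerivAt (fun y : EuclideanSpace ℝ (Fin n) => -‖y‖^2/2)
      ((-1 : ℝ) • (innerSL ℝ x : EuclideanSpace ℝ (Fin n) →L[ℝ] ℝ)) x := by
    have := (hq.neg).const_smul (2⁻¹:ℝ)
    convert! this using 1
    · funext y; simp; ring
    · ext b
      simp
  have h2 := (Real.hasDerivAt_exp (-‖x‖^2/2)).comp_hasFDerivAt x h1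
  have h3 := h2.const_mul (Real.pi ^ (-(n : ℝ) / 4))
  convert! h3 using 1
  ext b
  simp
  ring

lemma fderiv_groundState (x b : EuclideanSpace ℝ (Fin n)) :
    fderiv ℝ (groundState n) x b
      = -((∑ k, x k * b k : ℝ) : ℂ) * groundState n x := by
  have h := Complex.ofRealCLM.hasFDerivAt.comp x (groundState_real_hasFDerivAt x)
  have h2 : HasFDerivAt (groundState n)
      (Complex.ofRealCLM.comp
        ((-(Real.pi ^ (-(n : ℝ) / 4) * Real.exp (-‖x‖ ^ 2 / 2))) •
          (innerSL ℝ x : EuclideanSpace ℝ (Fin n) →L[ℝ] ℝ))) x := h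
  rw [h2.fderiv]
  simp only [ContinuousLinearMap.coe_comp', Function.comp_apply,
    ContinuousLinearMap.coe_smul', Pi.smul_apply, innerSL_apply_apply, smul_eq_mul,
    Complex.ofRealCLM_apply, groundState]
  have : (inner ℝ x b : ℝ) = ∑ k, x k * b k := by
    simp [PiLp.inner_apply, RCLike.inner_apply, mul_comm]
  rw [this]
  push_cast
  ring

lemma heisOp_groundState (a b : EuclideanSpace ℝ (Fin n)) (x : EuclideanSpace ℝ (Fin n)) :
    heisOp a b (groundState n) x
      = (∑ i, (Complex.I * (a i : ℂ) - (b i : ℂ)) * (x i : ℂ)) * groundState n x := by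
  unfold heisOp
  rw [fderiv_groundState]
  push_cast
  rw [← add_mul]
  congr 1
  rw [Finset.mul_sum, ← Finset.sum_neg_distrib, ← Finset.sum_add_distrib]
  congr 1; funext i; ring

lemma groundState_sq (x : EuclideanSpace ℝ (Fin n)) :
    groundState n x * groundState n x
      = ((Real.pi ^ (-(n : ℝ) / 2) * Real.exp (-‖x‖ ^ 2) : ℝ) : ℂ) := by
  unfold groundState
  rw [← Complex.ofReal_mul]
  congr 1
  rw [show Real.pi ^ (-(n : ℝ) / 4) * Real.exp (-‖x‖ ^ 2 / 2) *
      (Real.pi ^ (-(n : ℝ) / 4) * Real.exp (-‖x‖ ^ 2 / 2))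
      = (Real.pi ^ (-(n : ℝ) / 4) * Real.pi ^ (-(n : ℝ) / 4)) *
        (Real.exp (-‖x‖ ^ 2 / 2) * Real.exp (-‖x‖ ^ 2 / 2)) from by ring]
  rw [← Real.rpow_add Real.pi_pos, ← Real.exp_add,
    show (-(n:ℝ)/4 + -(n:ℝ)/4) = -(n:ℝ)/2 from by ring,
    show (-‖x‖^2/2 + -‖x‖^2/2 : ℝ) = -‖x‖^2 from by ring]


end Aux

/-- For `u = a + ib`, `v = a' + ib'` in `ℂⁿ`, the `L²(ℝⁿ)` inner product
`⟨ũ(e), ṽ(e)⟩` (conjugate-linear in the first argument) equals `(1/2) h(u,v)`,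
where `h` is the standard Hermitian inner product on `ℂⁿ`
(conjugate-linear in the first argument). -/
theorem heis_ground_state_inner {n : ℕ} (a b a' b' : EuclideanSpace ℝ (Fin n))
    (u v : EuclideanSpace ℂ (Fin n))
    (hu : ∀ i, u i = (a i : ℂ) + Complex.I * (b i : ℂ))
    (hv : ∀ i, v i = (a' i : ℂ) + Complex.I * (b' i : ℂ)) :
    ∫ x : EuclideanSpace ℝ (Fin n),
        (starRingEnd ℂ) (heisOp a b (groundState n) x) * heisOp a' b' (groundState n) x
      = (1 / 2 : ℂ) * (inner ℂ u v : ℂ) := by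
  set C : Fin n → ℂ := fun i => -(Complex.I * (a i : ℂ)) - (b i : ℂ) with hC
  set D : Fin n → ℂ := fun j => Complex.I * (a' j : ℂ) - (b' j : ℂ) with hD
  set K : ℝ := Real.pi ^ (-(n : ℝ) / 2) with hK
  have step1 : ∀ x : EuclideanSpace ℝ (Fin n),
      (starRingEnd ℂ) (heisOp a b (groundState n) x) * heisOp a' b' (groundState n) x
      = ∑ i, ∑ j, (C i * D j) * ((K * (x i * x j * Real.exp (-‖x‖^2)) : ℝ) : ℂ) := by
    intro x
    rw [heisOp_groundState, heisOp_groundState]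
    rw [map_mul, map_sum]
    have hconj : ∀ i, (starRingEnd ℂ) ((Complex.I * (a i : ℂ) - (b i : ℂ)) * (x i : ℂ))
        = C i * (x i : ℂ) := by
      intro i
      simp [hC, map_mul, map_sub, Complex.conj_ofReal, Complex.conj_I]
      try ring
    rw [Finset.sum_congr rfl (fun i _ => hconj i)]
    have hgc : (starRingEnd ℂ) (groundState n x) = groundState n x := Complex.conj_ofReal _
    rw [hgc]
    rw [show (∑ i, C i * (x i:ℂ)) * groundState n x * ((∑ j, (Complex.I * (a' j : ℂ) - (b' j : ℂ)) * (x j:ℂ)) * groundState n x)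
        = ((∑ i, C i * (x i:ℂ)) * (∑ j, D j * (x j:ℂ))) * (groundState n x * groundState n x) from by rw [hD]; ring]
    rw [groundState_sq, Finset.sum_mul_sum, Finset.sum_mul]
    congr 1; funext i
    rw [Finset.sum_mul]
    congr 1; funext j
    push_cast
    ring
  have hint : ∀ i j : Fin n, Integrable (fun x : EuclideanSpace ℝ (Fin n) =>
      (C i * D j) * ((K * (x i * x j * Real.exp (-‖x‖^2)) : ℝ) : ℂ)) := by
    intro i j
    exact (((moment_euc_integrable i j).const_mul K).ofReal).const_mul _
  simp only [step1]
  rw [integral_finset_sum _ (fun i _ => integrable_finset_sum _ (fun j _ => hint i j))]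
  have h2 : ∀ i : Fin n, (∫ x : EuclideanSpace ℝ (Fin n),
      ∑ j, (C i * D j) * ((K * (x i * x j * Real.exp (-‖x‖^2)) : ℝ) : ℂ))
      = ∑ j, (C i * D j) * ((K * (if i = j then Real.sqrt π ^ n / 2 else 0) : ℝ) : ℂ) := by
    intro i
    rw [integral_finset_sum _ (fun j _ => hint i j)]
    congr 1; funext j
    rw [integral_const_mul]
    congr 1
    have : (∫ x : EuclideanSpace ℝ (Fin n), K * (x i * x j * Real.exp (-‖x‖^2)))
        = K * (if i = j then Real.sqrt π ^ n / 2 else 0) := by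
      rw [integral_const_mul, moment_euc]
    rw [← this]
    exact integral_ofReal (𝕜 := ℂ)
  simp only [h2]
  have hNorm : K * (Real.sqrt π ^ n / 2) = 1/2 := by
    have hs : Real.sqrt π ^ n = π ^ ((n:ℝ)/2) := by
      rw [Real.sqrt_eq_rpow, ← Real.rpow_natCast (π ^ ((1:ℝ)/2)) n,
        ← Real.rpow_mul Real.pi_pos.le]
      congr 1
      ring
    rw [hs, hK, show π ^ (-(n:ℝ)/2) * (π ^ ((n:ℝ)/2) / 2) = (π ^ (-(n:ℝ)/2) * π ^ ((n:ℝ)/2)) / 2 from by ring,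
      ← Real.rpow_add Real.pi_pos,
      show (-(n:ℝ)/2 + (n:ℝ)/2) = 0 from by ring, Real.rpow_zero]
  have h3 : ∀ i j : Fin n, C i * D j * ((K * (if i = j then Real.sqrt π ^ n / 2 else 0) : ℝ) : ℂ)
      = if i = j then C i * D i * (1/2 : ℂ) else 0 := by
    intro i j
    by_cases h : i = j
    · subst h
      simp [hNorm]
    · simp [h]
  simp only [h3]
  simp only [Finset.sum_ite_eq, Finset.mem_univ, if_true]
  have hinner : (inner ℂ u v : ℂ) = ∑ i, (starRingEnd ℂ) (u i) * v i := by
    simp [PiLp.inner_apply, RCLike.inner_apply, mul_comm]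
  rw [hinner, Finset.mul_sum]
  congr 1; funext i
  rw [hu i, hv i]
  simp only [hC, hD, map_add, map_mul, Complex.conj_ofReal, Complex.conj_I]
  ring_nf
  simp only [Complex.I_sq]
  ring
end

section
/- Let V and W be finite-dimensional symplectic vector spaces, let Γ ⊂ V × W⁻ be a Lagrangian subspace (where W⁻ denotes W with the negated symplectic form), and let Σ ⊂ W be an isotropic subspace. Then the composition Γ∘Σ := { v ∈ V : ∃ w ∈ Σ, (v,w) ∈ Γ } is an isotropic subspace of V. -/
open Module LinearMap

/-- The symplectic form `ω_V ⊕ (−ω_W)` on `V × W⁻`. -/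
noncomputable def prodNegForm {V W : Type*} [AddCommGroup V] [Module ℝ V]
    [AddCommGroup W] [Module ℝ W]
    (ωV : LinearMap.BilinForm ℝ V) (ωW : LinearMap.BilinForm ℝ W) :
    LinearMap.BilinForm ℝ (V × W) :=
  (ωV.comp (LinearMap.fst ℝ V W) (LinearMap.fst ℝ V W)) -
  (ωW.comp (LinearMap.snd ℝ V W) (LinearMap.snd ℝ V W))

/-- The composition `Γ∘Σ = { v : ∃ w ∈ Σ, (v,w) ∈ Γ }` of a linear relation `Γ ⊂ V × W`
with a subspace `Σ ⊂ W`, as a subspace of `V`. -/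
noncomputable def relComp {V W : Type*} [AddCommGroup V] [Module ℝ V]
    [AddCommGroup W] [Module ℝ W]
    (Γ : Submodule ℝ (V × W)) (S : Submodule ℝ W) : Submodule ℝ V :=
  Submodule.map (LinearMap.fst ℝ V W) (Γ ⊓ Submodule.prod ⊤ S)

section

variable {V W : Type*} [AddCommGroup V] [Module ℝ V] [AddCommGroup W] [Module ℝ W]

theorem prodNegForm_apply (ωV : LinearMap.BilinForm ℝ V) (ωW : LinearMap.BilinForm ℝ W)
    (p q : V × W) : prodNegForm ωV ωW p q = ωV p.1 q.1 - ωW p.2 q.2 :=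
  rfl

theorem mem_relComp {Γ : Submodule ℝ (V × W)} {S : Submodule ℝ W} {v : V} :
    v ∈ relComp Γ S ↔ ∃ w ∈ S, (v, w) ∈ Γ := by
  simp [relComp, and_comm]

end

theorem relComp_isotropic_general
    {V W : Type*} [AddCommGroup V] [Module ℝ V]
    [AddCommGroup W] [Module ℝ W]
    (ωV : LinearMap.BilinForm ℝ V) (ωW : LinearMap.BilinForm ℝ W)
    (Γ : Submodule ℝ (V × W))
    (hΓiso : ∀ p ∈ Γ, ∀ q ∈ Γ, prodNegForm ωV ωW p q = 0)
    (S : Submodule ℝ W) (hSiso : ∀ w₁ ∈ S, ∀ w₂ ∈ S, ωW w₁ w₂ = 0) :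
    ∀ v₁ ∈ relComp Γ S, ∀ v₂ ∈ relComp Γ S, ωV v₁ v₂ = 0 := by
  intro v₁ hv₁ v₂ hv₂
  obtain ⟨w₁, hw₁, hΓ₁⟩ := mem_relComp.1 hv₁
  obtain ⟨w₂, hw₂, hΓ₂⟩ := mem_relComp.1 hv₂
  have h := hΓiso _ hΓ₁ _ hΓ₂
  rwa [prodNegForm_apply, hSiso w₁ hw₁ w₂ hw₂, sub_zero] at h

/-- Let `V`, `W` be finite-dimensional symplectic vector spaces, `Γ ⊂ V × W⁻` a
Lagrangian subspace, and `Σ ⊂ W` an isotropic subspace.  Then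
`Γ∘Σ = { v ∈ V : ∃ w ∈ Σ, (v,w) ∈ Γ }` is an isotropic subspace of `V`. -/
theorem relComp_isotropic
    {V W : Type*} [AddCommGroup V] [Module ℝ V] [FiniteDimensional ℝ V]
    [AddCommGroup W] [Module ℝ W] [FiniteDimensional ℝ W]
    (ωV : LinearMap.BilinForm ℝ V) (ωW : LinearMap.BilinForm ℝ W)
    (hValt : ∀ v, ωV v v = 0) (hWalt : ∀ w, ωW w w = 0)
    (hVnd : ∀ v, (∀ v', ωV v v' = 0) → v = 0)
    (hWnd : ∀ w, (∀ w', ωW w w' = 0) → w = 0)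
    (Γ : Submodule ℝ (V × W))
    (hΓiso : ∀ p ∈ Γ, ∀ q ∈ Γ, prodNegForm ωV ωW p q = 0)
    (hΓlag : 2 * finrank ℝ Γ = finrank ℝ V + finrank ℝ W)
    (S : Submodule ℝ W) (hSiso : ∀ w₁ ∈ S, ∀ w₂ ∈ S, ωW w₁ w₂ = 0) :
    ∀ v₁ ∈ relComp Γ S, ∀ v₂ ∈ relComp Γ S, ωV v₁ v₂ = 0 :=
  relComp_isotropic_general ωV ωW Γ hΓiso S hSiso
end

section
/- Let V, W be finite-dimensional symplectic vector spaces, Γ ⊂ V × W⁻ Lagrangian, Σ ⊂ W isotropic, with (i) Γ∘Σ Lagrangian in V and (ii) { w ∈ Σ : (0,w) ∈ Γ } = {0}. Let U₁ := { w ∈ Σ^⊥ : (0,w) ∈ Γ } and let U ⊂ 𝒩 := Σ^⊥/Σ be its image. Then U is a Lagrangian subspace of the symplectic vector space 𝒩; in particular dim U = (1/2) dim 𝒩 = (1/2) dim W − dim Σ. -/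
open Module LinearMap

/-- Auxiliary equivalence. -/
def submoduleProdEquiv {R M N : Type*} [Semiring R] [AddCommMonoid M] [AddCommMonoid N]
    [Module R M] [Module R N] (p : Submodule R M) (q : Submodule R N) :
    (p.prod q) ≃ₗ[R] p × q where
  toFun x := (⟨x.1.1, x.2.1⟩, ⟨x.1.2, x.2.2⟩)
  invFun y := ⟨(y.1.1, y.2.1), ⟨y.1.2, y.2.2⟩⟩
  map_add' x y := rfl
  map_smul' c x := rfl
  left_inv x := rfl
  right_inv y := rfl

/-- Under assumptions (i) `Γ∘Σ` Lagrangian in `V` and (ii) `{w ∈ Σ : (0,w) ∈ Γ} = {0}`,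
the image `U` of `U₁ = { w ∈ Σ^⊥ : (0,w) ∈ Γ }` in `𝒩 = Σ^⊥/Σ` is Lagrangian: it is
isotropic (for the induced form, computed on representatives in `U₁`) and
`dim U = (1/2) dim 𝒩 = (1/2) dim W − dim Σ`. -/
theorem U_is_lagrangian
    {V W : Type*} [AddCommGroup V] [Module ℝ V] [FiniteDimensional ℝ V]
    [AddCommGroup W] [Module ℝ W] [FiniteDimensional ℝ W]
    (ωV : LinearMap.BilinForm ℝ V) (ωW : LinearMap.BilinForm ℝ W)
    (hValt : ∀ v, ωV v v = 0) (hWalt : ∀ w, ωW w w = 0)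
    (hVnd : ∀ v, (∀ v', ωV v v' = 0) → v = 0)
    (hWnd : ∀ w, (∀ w', ωW w w' = 0) → w = 0)
    (Γ : Submodule ℝ (V × W))
    (hΓiso : ∀ p ∈ Γ, ∀ q ∈ Γ, prodNegForm ωV ωW p q = 0)
    (hΓlag : 2 * finrank ℝ Γ = finrank ℝ V + finrank ℝ W)
    (S : Submodule ℝ W) (hSiso : ∀ w₁ ∈ S, ∀ w₂ ∈ S, ωW w₁ w₂ = 0)
    (hcompiso : ∀ v₁ ∈ relComp Γ S, ∀ v₂ ∈ relComp Γ S, ωV v₁ v₂ = 0)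
    (hcomplag : 2 * finrank ℝ (relComp Γ S) = finrank ℝ V)
    (hker : ∀ w ∈ S, (0, w) ∈ Γ → w = 0) :
    (∀ w₁ ∈ ωW.orthogonal S ⊓ Submodule.comap (LinearMap.inr ℝ V W) Γ,
       ∀ w₂ ∈ ωW.orthogonal S ⊓ Submodule.comap (LinearMap.inr ℝ V W) Γ,
         ωW w₁ w₂ = 0) ∧
    (2 * finrank ℝ
        (LinearMap.range
          ((Submodule.comap (ωW.orthogonal S).subtype S).mkQ ∘ₗ
            Submodule.inclusion
              (inf_le_left :
                ωW.orthogonal S ⊓ Submodule.comap (LinearMap.inr ℝ V W) Γ ≤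
                  ωW.orthogonal S)))
      = finrank ℝ ((ωW.orthogonal S) ⧸ Submodule.comap (ωW.orthogonal S).subtype S)) ∧
    (2 * (finrank ℝ
        (LinearMap.range
          ((Submodule.comap (ωW.orthogonal S).subtype S).mkQ ∘ₗ
            Submodule.inclusion
              (inf_le_left :
                ωW.orthogonal S ⊓ Submodule.comap (LinearMap.inr ℝ V W) Γ ≤
                  ωW.orthogonal S))) + finrank ℝ S)
      = finrank ℝ W) := by
  classical
  set Ω := prodNegForm ωV ωW with hΩ
  have hΩapp : ∀ p q : V × W, Ω p q = ωV p.1 q.1 - ωW p.2 q.2 := by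
    intro p q; simp [hΩ, prodNegForm]
  have hWrefl : ωW.IsRefl := (LinearMap.IsAlt.isRefl hWalt)
  have hVrefl : ωV.IsRefl := (LinearMap.IsAlt.isRefl hValt)
  have hΩalt : Ω.IsAlt := by intro p; rw [hΩapp]; rw [hValt, hWalt]; ring
  have hΩrefl : Ω.IsRefl := hΩalt.isRefl
  have hΩnd : Ω.Nondegenerate := by
    refine hΩrefl.nondegenerate_iff_separatingLeft.mpr ?_
    intro p hp
    have h1 : p.1 = 0 := by
      apply hVnd; intro v'
      have := hp (v', 0); rw [hΩapp] at this; simpa using this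
    have h2 : p.2 = 0 := by
      apply hWnd; intro w'
      have := hp (0, w'); rw [hΩapp] at this; simp at this
      simpa using this
    exact Prod.ext h1 h2
  have hWnd' : ωW.Nondegenerate := hWrefl.nondegenerate_iff_separatingLeft.mpr hWnd
  -- names
  set A : Submodule ℝ (V × W) := Submodule.prod ⊤ S with hA
  set n := finrank ℝ V
  set m := finrank ℝ W
  set s := finrank ℝ S
  have htot : finrank ℝ (V × W) = n + m := Module.finrank_prod
  -- Step A : Γ = Ω.orthogonal Γ
  have hΓle : Γ ≤ Ω.orthogonal Γ := by
    intro x hx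
    rw [LinearMap.BilinForm.mem_orthogonal_iff]
    intro q hq
    exact hΓiso q hq x hx
  have hΓfr : finrank ℝ (Ω.orthogonal Γ) = finrank ℝ (V × W) - finrank ℝ Γ :=
    LinearMap.BilinForm.finrank_orthogonal hΩnd Γ
  have hΓorth : Γ = Ω.orthogonal Γ := by
    apply Submodule.eq_of_le_of_finrank_le hΓle
    rw [hΓfr, htot]; omega
  -- Step B : orthogonal of A
  have hAorth : Ω.orthogonal A = Submodule.prod ⊥ (ωW.orthogonal S) := by
    ext p
    rw [LinearMap.BilinForm.mem_orthogonal_iff]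
    constructor
    · intro h
      have h1 : p.1 = 0 := by
        apply hVnd; intro v'
        apply hVrefl
        have := h (v', 0) (by simp [hA])
        rw [hΩapp] at this
        simpa using this
      refine Submodule.mem_prod.2 ⟨by simp [h1], ?_⟩
      rw [LinearMap.BilinForm.mem_orthogonal_iff]
      intro w hw
      have := h (0, w) (by simp [hA, hw])
      rw [hΩapp] at this
      simp at this
      simpa [LinearMap.BilinForm.isOrtho_def] using this
    · intro hp q hq
      rw [Submodule.mem_prod] at hp
      have h1 : p.1 = 0 := by simpa using hp.1
      rw [hΩapp, h1]
      have h2 := (LinearMap.BilinForm.mem_orthogonal_iff.1 hp.2) q.2 (Submodule.mem_prod.1 hq).2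
      simp [h2]
  -- orthogonal of sup
  have horthsup : Ω.orthogonal (Γ ⊔ A) = Ω.orthogonal Γ ⊓ Ω.orthogonal A := by
    ext p
    simp only [Submodule.mem_inf, LinearMap.BilinForm.mem_orthogonal_iff]
    constructor
    · intro h
      exact ⟨fun q hq => h q (Submodule.mem_sup_left hq),
             fun q hq => h q (Submodule.mem_sup_right hq)⟩
    · rintro ⟨h1, h2⟩ q hq
      rcases Submodule.mem_sup.1 hq with ⟨g, hg, a, ha, rfl⟩
      have hg' : Ω g p = 0 := h1 g hg
      have ha' : Ω a p = 0 := h2 a ha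
      show Ω (g + a) p = 0
      rw [map_add, LinearMap.add_apply, hg', ha', add_zero]
  -- Step C : finrank (Γ ⊓ A) = finrank relComp
  have hC : finrank ℝ (Γ ⊓ A : Submodule ℝ (V × W)) = finrank ℝ (relComp Γ S) := by
    have hrn := LinearMap.finrank_range_add_finrank_ker
      ((LinearMap.fst ℝ V W).domRestrict (Γ ⊓ A))
    have hrange : LinearMap.range ((LinearMap.fst ℝ V W).domRestrict (Γ ⊓ A)) =
        relComp Γ S := by
      rw [LinearMap.range_domRestrict]; rfl
    have hkerC : LinearMap.ker ((LinearMap.fst ℝ V W).domRestrict (Γ ⊓ A)) = ⊥ := by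
      rw [LinearMap.ker_eq_bot']
      rintro ⟨⟨v, w⟩, hvw⟩ hv0
      have hv : v = 0 := by simpa using hv0
      rw [Submodule.mem_inf] at hvw
      have hwS : w ∈ S := (Submodule.mem_prod.1 hvw.2).2
      have hwΓ : (0, w) ∈ Γ := by rw [← hv]; exact hvw.1
      have := hker w hwS hwΓ
      subst hv this; rfl
    rw [hrange, hkerC] at hrn
    simpa using hrn.symm
  -- Step D : finrank U₁' = finrank (Γ ⊓ prod ⊥ (orth S))
  set U₁ : Submodule ℝ W := ωW.orthogonal S ⊓ Submodule.comap (LinearMap.inr ℝ V W) Γ with hU₁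
  have hmapU : Submodule.map (LinearMap.inr ℝ V W) U₁ =
      Γ ⊓ Submodule.prod ⊥ (ωW.orthogonal S) := by
    ext p
    simp only [Submodule.mem_map, Submodule.mem_inf, Submodule.mem_prod, hU₁,
      Submodule.mem_comap, Submodule.mem_bot]
    constructor
    · rintro ⟨w, ⟨hw1, hw2⟩, rfl⟩
      exact ⟨hw2, rfl, hw1⟩
    · rintro ⟨hΓp, h0, hw⟩
      have hpe : (LinearMap.inr ℝ V W) p.2 = p := Prod.ext h0.symm rfl
      exact ⟨p.2, ⟨hw, by rw [hpe]; exact hΓp⟩, hpe⟩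
  have hDfr : finrank ℝ U₁ = finrank ℝ (Γ ⊓ Submodule.prod ⊥ (ωW.orthogonal S) :
      Submodule ℝ (V × W)) := by
    rw [← hmapU]
    exact (Submodule.equivMapOfInjective _ LinearMap.inr_injective U₁).finrank_eq
  -- Step E : Γ ⊓ prod ⊥ (orth S) = orthogonal (Γ ⊔ A)
  have hE : Γ ⊓ Submodule.prod ⊥ (ωW.orthogonal S) = Ω.orthogonal (Γ ⊔ A) := by
    rw [horthsup, ← hΓorth, hAorth]
  -- dimension bookkeeping
  have e3 := Submodule.finrank_sup_add_finrank_inf_eq Γ A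
  have hAfr : finrank ℝ A = n + s := by
    rw [hA]
    rw [show Submodule.prod (⊤ : Submodule ℝ V) S = Submodule.prod ⊤ S from rfl]
    rw [(submoduleProdEquiv (⊤ : Submodule ℝ V) S).finrank_eq, Module.finrank_prod, finrank_top]
  have e4a : finrank ℝ (Ω.orthogonal (Γ ⊔ A)) = (n + m) - finrank ℝ (Γ ⊔ A : Submodule ℝ (V × W)) := by
    rw [LinearMap.BilinForm.finrank_orthogonal hΩnd, htot]
  have e4b : finrank ℝ (Γ ⊔ A : Submodule ℝ (V × W)) ≤ n + m := htot ▸ Submodule.finrank_le _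
  -- Step F : kernel of mkQ ∘ inclusion is trivial
  set f := ((Submodule.comap (ωW.orthogonal S).subtype S).mkQ ∘ₗ
      Submodule.inclusion (inf_le_left :
        ωW.orthogonal S ⊓ Submodule.comap (LinearMap.inr ℝ V W) Γ ≤ ωW.orthogonal S)) with hf
  have hkerf : LinearMap.ker f = ⊥ := by
    rw [LinearMap.ker_eq_bot']
    rintro ⟨w, hw⟩ hw0
    have : Submodule.inclusion (inf_le_left :
        ωW.orthogonal S ⊓ Submodule.comap (LinearMap.inr ℝ V W) Γ ≤ ωW.orthogonal S) ⟨w, hw⟩ ∈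
        Submodule.comap (ωW.orthogonal S).subtype S := by
      rw [← Submodule.Quotient.mk_eq_zero]
      exact hw0
    have hwS : w ∈ S := by simpa [Submodule.mem_comap] using this
    have hwΓ : (0, w) ∈ Γ := by
      have := (Submodule.mem_inf.1 hw).2
      simpa [Submodule.mem_comap] using this
    have := hker w hwS hwΓ
    subst this; rfl
  have e6 : finrank ℝ (LinearMap.range f) = finrank ℝ U₁ := by
    have := LinearMap.finrank_range_add_finrank_ker f
    rw [hkerf] at this
    simpa [hU₁] using this
  -- quotient dimension
  have hSle : S ≤ ωW.orthogonal S := by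
    intro w hw
    rw [LinearMap.BilinForm.mem_orthogonal_iff]
    intro w' hw'
    exact hSiso w' hw' w hw
  have e8 : finrank ℝ (Submodule.comap (ωW.orthogonal S).subtype S) = s :=
    (Submodule.comapSubtypeEquivOfLe hSle).finrank_eq
  have e7 := Submodule.finrank_quotient_add_finrank (Submodule.comap (ωW.orthogonal S).subtype S)
  have e9 : finrank ℝ (ωW.orthogonal S) = m - s := by
    rw [LinearMap.BilinForm.finrank_orthogonal hWnd']
  have e9b : s ≤ m := Submodule.finrank_le S
  -- collect
  have keyU : finrank ℝ U₁ = (n + m) - finrank ℝ (Γ ⊔ A : Submodule ℝ (V × W)) := by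
    rw [hDfr, hE, e4a]
  have hfrΓA : 2 * finrank ℝ (Γ ⊓ A : Submodule ℝ (V × W)) = n := by rw [hC]; exact hcomplag
  refine ⟨?_, ?_, ?_⟩
  · intro w₁ hw₁ w₂ hw₂
    have h1 : ((0 : V), w₁) ∈ Γ := (Submodule.mem_inf.1 hw₁).2
    have h2 : ((0 : V), w₂) ∈ Γ := (Submodule.mem_inf.1 hw₂).2
    have h3 := hΓiso _ h1 _ h2
    rw [show prodNegForm ωV ωW ((0 : V), w₁) ((0 : V), w₂) = Ω ((0 : V), w₁) ((0 : V), w₂)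
      from rfl, hΩapp] at h3
    simp at h3
    simpa using h3
  · have hq : finrank ℝ ((ωW.orthogonal S) ⧸ Submodule.comap (ωW.orthogonal S).subtype S) =
        finrank ℝ (ωW.orthogonal S) - s := by omega
    rw [e6, keyU, hq, e9]
    omega
  · rw [e6, keyU]
    omega
end

section
/- Let (X, ω) be a symplectic vector space of dimension 2n with compatible complex structure J and associated inner product g(u,v) = ω(u,Jv), and let A : X → ℂ be a real-linear map. Decompose A = A⁺ + A⁻ where A⁺ is complex-linear and A⁻ is complex-antilinear with respect to J (i.e. A⁺(Ju) = iA⁺(u) and A⁻(Ju) = −iA⁻(u)). If the operator norms satisfy ‖A⁺‖ > ‖A⁻‖ (norms with respect to g and the standard norm on ℂ), then V := ker A is a symplectic subspace of X, i.e. the restriction of ω to V is nondegenerate. -/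
open Module RealInnerProductSpace

set_option maxHeartbeats 2000000 in
/-- Let `(X,ω)` be a `2n`-dimensional symplectic vector space with compatible complex
structure `J` and associated inner product `g(u,v) = ω(u,Jv)` (here the inner product of
`X` is `g`, and `ω u v = ⟪J u, v⟫`).  Let `A : X → ℂ` be real-linear, decomposed as
`A = A⁺ + A⁻` with `A⁺ = (A − iA∘J)/2` complex-linear and `A⁻ = (A + iA∘J)/2`
antilinear.  If `‖A⁺‖ > ‖A⁻‖` (operator norms) then `V = ker A` is a symplectic
subspace of `X`, i.e. `ω` restricted to `ker A` is nondegenerate. -/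
theorem ker_symplectic_of_opNorm_lt
    {X : Type*} [NormedAddCommGroup X] [InnerProductSpace ℝ X] [FiniteDimensional ℝ X]
    (n : ℕ) (hdim : finrank ℝ X = 2 * n)
    (J : X →L[ℝ] X) (hJ2 : ∀ u, J (J u) = -u)
    (hJiso : ∀ u v : X, (inner ℝ (J u) (J v) : ℝ) = inner ℝ u v)
    (ω : X →ₗ[ℝ] X →ₗ[ℝ] ℝ) (hω : ∀ u v, ω u v = (inner ℝ (J u) v : ℝ))
    (A : X →L[ℝ] ℂ)
    (hnorm : ‖(2⁻¹ : ℂ) • (A - Complex.I • (A ∘L J))‖ >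
             ‖(2⁻¹ : ℂ) • (A + Complex.I • (A ∘L J))‖) :
    ∀ v ∈ LinearMap.ker (A : X →ₗ[ℝ] ℂ), (∀ v' ∈ LinearMap.ker (A : X →ₗ[ℝ] ℂ), ω v v' = 0) → v = 0 := by
  intro v hv hvperp
  by_contra hv0
  set Ap : X →L[ℝ] ℂ := (2⁻¹ : ℂ) • (A - Complex.I • (A ∘L J)) with hAp
  set Am : X →L[ℝ] ℂ := (2⁻¹ : ℂ) • (A + Complex.I • (A ∘L J)) with hAm
  have hsum : ∀ u, Ap u + Am u = A u := by
    intro u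
    simp only [hAp, hAm, ContinuousLinearMap.smul_apply, ContinuousLinearMap.sub_apply,
      ContinuousLinearMap.add_apply, ContinuousLinearMap.comp_apply, smul_eq_mul]
    ring
  have hApJ : ∀ u, Ap (J u) = Complex.I * Ap u := by
    intro u
    simp only [hAp, ContinuousLinearMap.smul_apply, ContinuousLinearMap.sub_apply,
      ContinuousLinearMap.comp_apply, smul_eq_mul, hJ2 u, map_neg]
    ring_nf
    rw [Complex.I_sq]
    ring
  have hAmJ : ∀ u, Am (J u) = -(Complex.I * Am u) := by
    intro u
    simp only [hAm, ContinuousLinearMap.smul_apply, ContinuousLinearMap.add_apply,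
      ContinuousLinearMap.comp_apply, smul_eq_mul, hJ2 u, map_neg]
    ring_nf
    rw [Complex.I_sq]
    ring
  -- basic inner product facts
  have hinnJr : ∀ x y : X, ⟪x, J y⟫ = -⟪J x, y⟫ := by
    intro x y
    have := hJiso x (J y)
    rw [hJ2 y] at this
    rw [← this, inner_neg_right]
  have hxJx : ∀ x : X, ⟪x, J x⟫ = 0 := by
    intro x
    have h := hinnJr x x
    have h2 : ⟪J x, x⟫ = ⟪x, J x⟫ := real_inner_comm _ _
    linarith [h, h2.symm ▸ h]
  -- Riesz vectors
  have : CompleteSpace X := FiniteDimensional.complete ℝ X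
  set a : X := (InnerProductSpace.toDual ℝ X).symm (Complex.reCLM ∘L Ap) with ha_def
  set b : X := (InnerProductSpace.toDual ℝ X).symm (Complex.reCLM ∘L Am) with hb_def
  have ha : ∀ u, ⟪a, u⟫ = (Ap u).re := by
    intro u; rw [ha_def, InnerProductSpace.toDual_symm_apply]; rfl
  have hb : ∀ u, ⟪b, u⟫ = (Am u).re := by
    intro u; rw [hb_def, InnerProductSpace.toDual_symm_apply]; rfl
  have haIm : ∀ u, ⟪J a, u⟫ = (Ap u).im := by
    intro u
    have h1 : ⟪a, J u⟫ = (Ap (J u)).re := ha (J u)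
    rw [hApJ u] at h1
    have h2 : (Complex.I * Ap u).re = -(Ap u).im := by simp
    have h3 := hinnJr a u
    linarith [h1, h2 ▸ h1]
  have hbIm : ∀ u, ⟪J b, u⟫ = -(Am u).im := by
    intro u
    have h1 : ⟪b, J u⟫ = (Am (J u)).re := hb (J u)
    rw [hAmJ u] at h1
    have h2 : (-(Complex.I * Am u)).re = (Am u).im := by simp
    have h3 := hinnJr b u
    linarith [h1, h2 ▸ h1]
  -- A u in terms of a, b
  have hAre : ∀ u, (A u).re = ⟪a, u⟫ + ⟪b, u⟫ := by
    intro u; rw [← hsum u, Complex.add_re, ha, hb]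
  have hAim : ∀ u, (A u).im = ⟪J a, u⟫ - ⟪J b, u⟫ := by
    intro u; rw [← hsum u, Complex.add_im, haIm, hbIm]; ring
  -- the span
  set K : Submodule ℝ X := Submodule.span ℝ {a + b, J a - J b} with hK
  have hkerK : ∀ u : X, A u = 0 ↔ u ∈ Kᗮ := by
    intro u
    constructor
    · intro hu
      rw [Submodule.mem_orthogonal]
      intro w hw
      induction hw using Submodule.span_induction with
      | mem x hx =>
        rcases hx with hx | hx
        · subst hx
          rw [inner_add_left]
          have := hAre u
          rw [hu] at this
          simp at this
          linarith
        · simp only [Set.mem_singleton_iff] at hx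
          subst hx
          rw [inner_sub_left]
          have := hAim u
          rw [hu] at this
          simp at this
          linarith
      | zero => simp
      | add x y _ _ hx hy => rw [inner_add_left, hx, hy]; ring
      | smul c x _ hx => rw [inner_smul_left, hx]; ring
    · intro hu
      have h1 : ⟪a + b, u⟫ = 0 := by
        rw [Submodule.mem_orthogonal] at hu
        exact hu _ (Submodule.subset_span (by left; rfl))
      have h2 : ⟪J a - J b, u⟫ = 0 := by
        rw [Submodule.mem_orthogonal] at hu
        exact hu _ (Submodule.subset_span (by right; rfl))
      rw [inner_add_left] at h1
      rw [inner_sub_left] at h2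
      apply Complex.ext
      · rw [hAre u]; simpa using h1
      · rw [hAim u]; simpa using h2
  have hJvK : J v ∈ K := by
    rw [← Submodule.orthogonal_orthogonal K]
    rw [Submodule.mem_orthogonal]
    intro w hw
    have hwker : A w = 0 := by rw [hkerK]; exact hw
    have := hvperp w (by simpa [LinearMap.mem_ker] using hwker)
    rw [hω] at this
    rw [real_inner_comm]
    exact this
  rw [hK, Submodule.mem_span_pair] at hJvK
  obtain ⟨c₁, c₂, he⟩ := hJvK
  -- kernel equations
  have hAv : A v = 0 := hv
  have hre : ⟪a, v⟫ + ⟪b, v⟫ = 0 := by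
    have := hAre v; rw [hAv] at this; simpa using this.symm
  have him : ⟪J a, v⟫ - ⟪J b, v⟫ = 0 := by
    have := hAim v; rw [hAv] at this; simpa using this.symm
  -- convert to Jv
  have hav : ⟪a, v⟫ = ⟪J a, J v⟫ := (hJiso a v).symm
  have hbv : ⟪b, v⟫ = ⟪J b, J v⟫ := (hJiso b v).symm
  have hJav : ⟪J a, v⟫ = -⟪a, J v⟫ := by
    have := hJiso (J a) v
    rw [hJ2 a, inner_neg_left] at this
    linarith
  have hJbv : ⟪J b, v⟫ = -⟪b, J v⟫ := by
    have := hJiso (J b) v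
    rw [hJ2 b, inner_neg_left] at this
    linarith
  have hJaJa : (inner ℝ (J a) (J a) : ℝ) = inner ℝ a a := hJiso a a
  have hJbJb : (inner ℝ (J b) (J b) : ℝ) = inner ℝ b b := hJiso b b
  have hJaJb : (inner ℝ (J a) (J b) : ℝ) = inner ℝ a b := hJiso a b
  have haJb : (inner ℝ a (J b) : ℝ) = -inner ℝ (J a) b := hinnJr a b
  have hba : (inner ℝ b a : ℝ) = inner ℝ a b := real_inner_comm a b
  have hbJa : (inner ℝ b (J a) : ℝ) = inner ℝ (J a) b := real_inner_comm (J a) b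
  have hJba : (inner ℝ (J b) a : ℝ) = -inner ℝ (J a) b := by
    rw [real_inner_comm]; exact haJb
  have hJbJa : (inner ℝ (J b) (J a) : ℝ) = inner ℝ a b := by
    rw [real_inner_comm]; exact hJaJb
  have haJa : (inner ℝ a (J a) : ℝ) = 0 := hxJx a
  have hbJb : (inner ℝ b (J b) : ℝ) = 0 := hxJx b
  have hJaa : (inner ℝ (J a) a : ℝ) = 0 := by rw [real_inner_comm]; exact haJa
  have hJbb : (inner ℝ (J b) b : ℝ) = 0 := by rw [real_inner_comm]; exact hbJb
  -- expand inner products with Jv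
  have expand : ∀ x : X, (inner ℝ x (J v) : ℝ) =
      c₁ * (inner ℝ x a + inner ℝ x b) + c₂ * ((inner ℝ x (J a) : ℝ) - inner ℝ x (J b)) := by
    intro x
    rw [← he, inner_add_right, inner_smul_right, inner_smul_right, inner_add_right,
      inner_sub_right]
  have eJa := expand (J a)
  have eJb := expand (J b)
  have ea := expand a
  have eb := expand b
  rw [hJaa, hJaJa, hJaJb] at eJa
  rw [hJba, hJbb, hJbJa, hJbJb] at eJb
  rw [haJa, haJb] at ea
  rw [hba, hbJa, hbJb] at eb
  have key1 : c₂ * ((inner ℝ a a : ℝ) - inner ℝ b b) = 0 := by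
    have h := hre
    rw [hav, hbv, eJa, eJb] at h
    linear_combination h
  have key2 : c₁ * ((inner ℝ b b : ℝ) - inner ℝ a a) = 0 := by
    have h := him
    rw [hJav, hJbv, ea, eb] at h
    linear_combination h
  have hc : ¬ (c₁ = 0 ∧ c₂ = 0) := by
    rintro ⟨h1, h2⟩
    have hJv0 : J v = 0 := by rw [← he, h1, h2]; simp
    have h5 := hJ2 v
    rw [hJv0, map_zero] at h5
    exact hv0 (neg_eq_zero.mp h5.symm)
  have hst : (inner ℝ a a : ℝ) = inner ℝ b b := by
    have h3 : (c₁ ^ 2 + c₂ ^ 2) * ((inner ℝ a a : ℝ) - inner ℝ b b) = 0 := by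
      linear_combination c₂ * key1 - c₁ * key2
    rcases mul_eq_zero.1 h3 with h | h
    · exfalso
      apply hc
      have hc1 : c₁ ^ 2 = 0 := le_antisymm (by linarith [sq_nonneg c₂, h]) (sq_nonneg c₁)
      have hc2 : c₂ ^ 2 = 0 := le_antisymm (by linarith [sq_nonneg c₁, h]) (sq_nonneg c₂)
      exact ⟨pow_eq_zero_iff (two_ne_zero : (2:ℕ) ≠ 0) |>.mp hc1,
        pow_eq_zero_iff (two_ne_zero : (2:ℕ) ≠ 0) |>.mp hc2⟩
    · linarith
  -- norms
  have hnormeq : ‖a‖ = ‖b‖ := by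
    have h1 : ‖a‖ ^ 2 = (inner ℝ a a : ℝ) := (real_inner_self_eq_norm_sq a).symm
    have h2 : ‖b‖ ^ 2 = (inner ℝ b b : ℝ) := (real_inner_self_eq_norm_sq b).symm
    have h3 : (‖a‖ - ‖b‖) * (‖a‖ + ‖b‖) = 0 := by linear_combination h1 - h2 + hst
    rcases mul_eq_zero.1 h3 with h | h
    · linarith
    · have := norm_nonneg a; have := norm_nonneg b; linarith
  have hApnorm : ‖Ap‖ ≤ ‖a‖ := by
    apply ContinuousLinearMap.opNorm_le_bound _ (norm_nonneg a)
    intro u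
    obtain ⟨p, hp⟩ : ∃ p : ℝ, (inner ℝ a u : ℝ) = p := ⟨_, rfl⟩
    obtain ⟨q, hq⟩ : ∃ q : ℝ, (inner ℝ (J a) u : ℝ) = q := ⟨_, rfl⟩
    have hApu : ‖Ap u‖ ^ 2 = p ^ 2 + q ^ 2 := by
      rw [Complex.sq_norm, Complex.normSq_apply, ← ha u, ← haIm u,
        hp, hq]
      ring
    set w : X := p • u - q • (J u) with hw
    have h0 : (inner ℝ u (J u) : ℝ) = 0 := hxJx u
    have h0' : (inner ℝ (J u) u : ℝ) = 0 := by rw [real_inner_comm]; exact h0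
    have h1 : (inner ℝ (J u) (J u) : ℝ) = inner ℝ u u := hJiso u u
    have hww : ‖w‖ ^ 2 = (p ^ 2 + q ^ 2) * ‖u‖ ^ 2 := by
      have h2 : (inner ℝ w w : ℝ) = (p ^ 2 + q ^ 2) * inner ℝ u u := by
        simp only [hw, inner_sub_left, inner_sub_right, real_inner_smul_left,
          real_inner_smul_right, h0, h0', h1]
        ring
      rw [← real_inner_self_eq_norm_sq, h2, real_inner_self_eq_norm_sq]
    have haw : (inner ℝ a w : ℝ) = p ^ 2 + q ^ 2 := by
      simp only [hw, inner_sub_right, real_inner_smul_right]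
      rw [hinnJr a u, hp, hq]
      ring
    have hle2 : p ^ 2 + q ^ 2 ≤ ‖a‖ * ‖w‖ := by
      rw [← haw]; exact real_inner_le_norm a w
    rcases eq_or_lt_of_le (norm_nonneg (Ap u)) with hr0 | hr0
    · rw [← hr0]; exact mul_nonneg (norm_nonneg a) (norm_nonneg u)
    · have hr2 : 0 < ‖Ap u‖ ^ 2 := by positivity
      have hpq0 : (0:ℝ) ≤ p ^ 2 + q ^ 2 := by positivity
      have hsq : (p ^ 2 + q ^ 2) * (p ^ 2 + q ^ 2) ≤ (‖a‖ * ‖w‖) * (‖a‖ * ‖w‖) :=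
        mul_self_le_mul_self hpq0 hle2
      have hsq' : (‖Ap u‖ ^ 2) ^ 2 ≤ ‖a‖ ^ 2 * (‖Ap u‖ ^ 2 * ‖u‖ ^ 2) := by
        calc (‖Ap u‖ ^ 2) ^ 2 = (p ^ 2 + q ^ 2) * (p ^ 2 + q ^ 2) := by rw [hApu]; ring
          _ ≤ (‖a‖ * ‖w‖) * (‖a‖ * ‖w‖) := hsq
          _ = ‖a‖ ^ 2 * ‖w‖ ^ 2 := by ring
          _ = ‖a‖ ^ 2 * ((p ^ 2 + q ^ 2) * ‖u‖ ^ 2) := by rw [hww]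
          _ = ‖a‖ ^ 2 * (‖Ap u‖ ^ 2 * ‖u‖ ^ 2) := by rw [hApu]
      have h7 : ‖Ap u‖ ^ 2 * ‖Ap u‖ ^ 2 ≤ (‖a‖ * ‖u‖) ^ 2 * ‖Ap u‖ ^ 2 := by
        linarith [hsq']
      have hr2le : ‖Ap u‖ ^ 2 ≤ (‖a‖ * ‖u‖) ^ 2 := le_of_mul_le_mul_right h7 hr2
      have hM : (0:ℝ) ≤ ‖a‖ * ‖u‖ := mul_nonneg (norm_nonneg a) (norm_nonneg u)
      calc ‖Ap u‖ = Real.sqrt (‖Ap u‖ ^ 2) := (Real.sqrt_sq (norm_nonneg _)).symm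
        _ ≤ Real.sqrt ((‖a‖ * ‖u‖) ^ 2) := Real.sqrt_le_sqrt hr2le
        _ = ‖a‖ * ‖u‖ := Real.sqrt_sq hM
  have hAmnorm : ‖b‖ ≤ ‖Am‖ := by
    rcases eq_or_ne b 0 with hb0 | hb0
    · rw [hb0]; simpa using norm_nonneg Am
    · have h1 : ‖Am b‖ ≤ ‖Am‖ * ‖b‖ := Am.le_opNorm b
      have h2 : Am b = ((inner ℝ b b : ℝ) : ℂ) := by
        apply Complex.ext
        · rw [← hb b, Complex.ofReal_re]
        · have h6 := hbIm b
          rw [hJbb] at h6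
          rw [Complex.ofReal_im]
          linarith [h6]
      rw [h2] at h1
      have h3 : ‖(((inner ℝ b b : ℝ)) : ℂ)‖ = (inner ℝ b b : ℝ) := by
        rw [Complex.norm_real, Real.norm_eq_abs, abs_of_nonneg]
        exact real_inner_self_nonneg
      rw [h3] at h1
      have h4 : (inner ℝ b b : ℝ) = ‖b‖ ^ 2 := real_inner_self_eq_norm_sq b
      have h5 : 0 < ‖b‖ := norm_pos_iff.2 hb0
      rw [h4] at h1
      calc ‖b‖ = ‖b‖ ^ 2 / ‖b‖ := by rw [pow_two, mul_div_assoc, div_self h5.ne', mul_one]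
        _ ≤ ‖Am‖ * ‖b‖ / ‖b‖ := (div_le_div_iff_of_pos_right h5).mpr h1
        _ = ‖Am‖ := by rw [mul_div_assoc, div_self h5.ne', mul_one]
  linarith
end
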